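/- Let x, y, z : ℕ → ℤ → F₂ be families of F₂-valued sequences with x̃_i(t) = Σ_{τ=0}^{i-1} x_{i-τ}(t-τ) and ỹ, z̃ defined analogously. Fix integers t, δx, δy, δz and natural numbers i, j, k with i, j, k ≥ 1. Define E(s) = x̃_{i-1}(s-δx+1) + ỹ_j(s-δy-1) + z̃_{k+1}(s-δz) and F(s) = x̃_i(s-δx+1) + ỹ_{j-1}(s-δy) + z̃_{k+1}(s-δz-1). Then E(t-1) + F(t) = x_i(t-δx+1) + ỹ_j(t-δy-2) + ỹ_{j-1}(t-δy). -/

import Mathlib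

/-- Coded symbol `x̃_i(t) = Σ_{τ=0}^{i-1} x_{i-τ}(t-τ)`; in particular `x̃_0(t) = 0`. -/
def tilde (x : ℕ → ℤ → ZMod 2) (i : ℕ) (t : ℤ) : ZMod 2 :=
  ∑ τ ∈ Finset.range i, x (i - τ) (t - (τ : ℤ))

theorem tilde_succ (x : ℕ → ℤ → ZMod 2) (n : ℕ) (t : ℤ) :
    tilde x (n + 1) t = x (n + 1) t + tilde x n (t - 1) := by
  simp only [tilde, Finset.sum_range_succ', Nat.sub_zero, Nat.cast_zero, sub_zero,
    add_comm (x (n + 1) t)]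
  congr 1
  refine Finset.sum_congr rfl fun τ _ => ?_
  rw [Nat.add_sub_add_right, Nat.cast_succ, sub_add_eq_sub_sub_swap]

theorem neighbour_sum_EF_general (x y z : ℕ → ℤ → ZMod 2) (t δx δy δz : ℤ) (i j k : ℕ)
    (hi : 1 ≤ i)
    (E F : ℤ → ZMod 2)
    (hE : ∀ s, E s =
      tilde x (i - 1) (s - δx + 1) + tilde y j (s - δy - 1) + tilde z (k + 1) (s - δz))
    (hF : ∀ s, F s =
      tilde x i (s - δx + 1) + tilde y (j - 1) (s - δy) + tilde z (k + 1) (s - δz - 1)) :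
    E (t - 1) + F t =
      x i (t - δx + 1) + tilde y j (t - δy - 2) + tilde y (j - 1) (t - δy) := by
  obtain ⟨n, rfl⟩ := Nat.exists_eq_add_of_le' hi
  rw [hE, hF, tilde_succ x n, Nat.add_sub_cancel]
  -- both `x̃_n(t - δx)` and `z̃_{k+1}(t - δz - 1)` now occur twice and cancel in characteristic 2
  grind

/-- Combining the transmissions `E(t-1)` and `F(t)` of neighbours `E[P]` and `F[P]`. -/
theorem neighbour_sum_EF (x y z : ℕ → ℤ → ZMod 2) (t δx δy δz : ℤ) (i j k : ℕ)
    (hi : 1 ≤ i) (hj : 1 ≤ j) (hk : 1 ≤ k)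
    (E F : ℤ → ZMod 2)
    (hE : ∀ s, E s =
      tilde x (i - 1) (s - δx + 1) + tilde y j (s - δy - 1) + tilde z (k + 1) (s - δz))
    (hF : ∀ s, F s =
      tilde x i (s - δx + 1) + tilde y (j - 1) (s - δy) + tilde z (k + 1) (s - δz - 1)) :
    E (t - 1) + F t =
      x i (t - δx + 1) + tilde y j (t - δy - 2) + tilde y (j - 1) (t - δy) :=
  neighbour_sum_EF_general x y z t δx δy δz i j k hi E F hE hF
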